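/- arXiv:1001.1236 — 7 statements merged into one kernel-verified Lean document; each statement's English description precedes it below -/
import Mathlib

section
/- Let L/F be a Galois extension of fields of characteristic zero with [L:F] = 3, and suppose α ∈ L is a nonzero element with Tr_{L/F}(α) = 0 and Tr_{L/F}(α⁻¹) = 0. Then the minimal polynomial of α over F has the form X³ − a for some a ∈ F, and F contains a primitive third root of unity (i.e. there exists ω ∈ F with ω ≠ 1 and ω³ = 1). -/
/-!
As `[L:F] = 3` is prime and `α ∉ F` (otherwise `Tr α = 3α ≠ 0`), the minimal polynomial of `α`
is a cubic `X³ + bX² + cX + d`. The trace of `α` is `-b`, and the minimal polynomial of `α⁻¹` is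
the reversed polynomial divided by `d`, whose trace is `-c/d`; hence `b = c = 0`. As `L/F` is
Galois, `X³ + d` has a root `β ≠ α` in `L`, and `ζ = β/α` is a cube root of unity other than `1`.
Its degree over `F` divides `3` but is at most `2`, so `ζ ∈ F`.
-/

open Polynomial Module

section
variable {F L : Type*} [Field F] [Field L] [Algebra F L]

theorem minpoly_inv_eq_C_mul_reverse {x : L} (hx : IsIntegral F x) (hx0 : x ≠ 0) :
    minpoly F x⁻¹ = C ((minpoly F x).coeff 0)⁻¹ * (minpoly F x).reverse := by
  have hc : (minpoly F x).coeff 0 ≠ 0 := minpoly.coeff_zero_ne_zero hx hx0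
  have hrev : aeval x⁻¹ (minpoly F x).reverse = 0 := by
    let := invertibleOfNonzero hx0
    rw [aeval_def, ← invOf_eq_inv, eval₂_reverse_eq_zero_iff, ← aeval_def, minpoly.aeval]
  symm
  refine minpoly.unique _ _ ?_ (by simp [hrev]) fun q hq hqx ↦ ?_
  · rw [Monic, leadingCoeff_mul, leadingCoeff_C, reverse_leadingCoeff,
      trailingCoeff_eq_coeff_zero hc, inv_mul_cancel₀ hc]
  · have hq' : aeval x q.reverse = 0 := by
      let := invertibleOfNonzero (inv_ne_zero hx0)
      rw [aeval_def, ← inv_inv x, ← invOf_eq_inv, eval₂_reverse_eq_zero_iff, ← aeval_def, hqx]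
    calc degree (C ((minpoly F x).coeff 0)⁻¹ * (minpoly F x).reverse)
        = degree (minpoly F x) := by
          rw [degree_C_mul (inv_ne_zero hc),
            degree_eq_natDegree (by simpa using minpoly.ne_zero hx),
            degree_eq_natDegree (minpoly.ne_zero hx), reverse_natDegree,
            natTrailingDegree_eq_zero.2 (.inr hc), Nat.sub_zero]
      _ ≤ degree q.reverse := minpoly.degree_le_of_ne_zero F x (by simpa using hq.ne_zero) hq'
      _ ≤ degree q := by
          rw [degree_eq_natDegree hq.ne_zero]
          exact degree_le_of_natDegree_le (reverse_natDegree_le q)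

theorem nextCoeff_minpoly_inv {x : L} (hx : IsIntegral F x) (hx0 : x ≠ 0) :
    (minpoly F x⁻¹).nextCoeff = (minpoly F x).coeff 1 / (minpoly F x).coeff 0 := by
  have hc : (minpoly F x).coeff 0 ≠ 0 := minpoly.coeff_zero_ne_zero hx hx0
  have hpos := minpoly.natDegree_pos hx
  rw [minpoly_inv_eq_C_mul_reverse hx hx0, nextCoeff_C_mul, nextCoeff_of_natDegree_pos,
    coeff_reverse, reverse_natDegree, natTrailingDegree_eq_zero.2 (.inr hc), Nat.sub_zero,
    revAt_le (by omega), div_eq_inv_mul]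
  · congr; omega
  · rw [reverse_natDegree, natTrailingDegree_eq_zero.2 (.inr hc)]; omega

theorem exists_pow_eq_one_ne_one_of_minpoly_eq_X_pow_sub_C [Normal F L] [Algebra.IsSeparable F L]
    {x : L} (hx0 : x ≠ 0) {n : ℕ} (hn : 2 ≤ n) {a : F} (h : minpoly F x = X ^ n - C a) :
    ∃ ζ : L, ζ ≠ 1 ∧ ζ ^ n = 1 := by
  have hcard : Fintype.card ((minpoly F x).rootSet L) = n := by
    rw [card_rootSet_eq_natDegree (Algebra.IsSeparable.isSeparable F x) (Normal.splits' x), h,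
      natDegree_X_pow_sub_C]
  have hroot : ∀ y ∈ (minpoly F x).rootSet L, y ^ n = algebraMap F L a := fun y hy ↦ by
    simpa [h, sub_eq_zero] using (mem_rootSet.1 hy).2
  have hx : x ∈ (minpoly F x).rootSet L :=
    mem_rootSet.2 ⟨minpoly.ne_zero (Algebra.IsIntegral.isIntegral x), minpoly.aeval F x⟩
  obtain ⟨⟨y, hy⟩, hyx⟩ := Fintype.exists_ne_of_one_lt_card (hcard ▸ hn) ⟨x, hx⟩
  refine ⟨y / x, fun h ↦ hyx (Subtype.ext ((div_eq_one_iff_eq hx0).1 h)), ?_⟩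
  rw [div_pow, hroot y hy, ← hroot x hx, div_self (pow_ne_zero _ hx0)]

variable [FiniteDimensional F L]

theorem nextCoeff_minpoly_eq_zero_of_trace_eq_zero [CharZero F] {x : L}
    (h : Algebra.trace F L x = 0) : (minpoly F x).nextCoeff = 0 := by
  rw [trace_eq_finrank_mul_minpoly_nextCoeff] at h
  simpa [Module.finrank_pos.ne'] using h

theorem notMem_range_algebraMap_of_trace_eq_zero [CharZero F] {x : L} (hx0 : x ≠ 0)
    (h : Algebra.trace F L x = 0) : x ∉ (algebraMap F L).range := by
  rintro ⟨a, rfl⟩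
  rw [Algebra.trace_algebraMap, nsmul_eq_mul] at h
  simp_all [Module.finrank_pos.ne']

theorem mem_range_algebraMap_or_natDegree_minpoly_eq_finrank (hp : (finrank F L).Prime) (x : L) :
    x ∈ (algebraMap F L).range ∨ (minpoly F x).natDegree = finrank F L := by
  rw [← minpoly.natDegree_eq_one_iff]
  exact hp.eq_one_or_self_of_dvd _ (minpoly.degree_dvd (.of_finite F x))

theorem mem_range_algebraMap_of_pow_finrank_eq_one (hp : (finrank F L).Prime) {ζ : L}
    (hζ : ζ ^ finrank F L = 1) : ζ ∈ (algebraMap F L).range := by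
  rcases eq_or_ne ζ 1 with rfl | hζ1
  · exact ⟨1, map_one _⟩
  refine (mem_range_algebraMap_or_natDegree_minpoly_eq_finrank hp ζ).resolve_right fun hdeg ↦ ?_
  have := Fact.mk hp
  have hroot : aeval ζ (cyclotomic (finrank F L) F) = 0 := by
    simpa [cyclotomic_prime, hζ, sub_eq_zero, hζ1] using geom_sum_mul ζ (finrank F L)
  have := natDegree_le_of_dvd (minpoly.dvd F ζ hroot) (cyclotomic_ne_zero _ _)
  rw [natDegree_cyclotomic, Nat.totient_prime hp, hdeg] at this
  have := hp.pos
  omega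

theorem minpoly_eq_X_pow_three_sub_C_of_trace_eq_zero [CharZero F] {x : L} (hx0 : x ≠ 0)
    (hdeg : (minpoly F x).natDegree = 3) (h1 : Algebra.trace F L x = 0)
    (h2 : Algebra.trace F L x⁻¹ = 0) : ∃ a : F, minpoly F x = X ^ 3 - C a := by
  have hx : IsIntegral F x := .of_finite F x
  have hc2 : (minpoly F x).coeff 2 = 0 := by
    simpa [nextCoeff_of_natDegree_pos, hdeg] using nextCoeff_minpoly_eq_zero_of_trace_eq_zero h1
  have hc1 : (minpoly F x).coeff 1 = 0 := by
    simpa [nextCoeff_minpoly_inv hx hx0, minpoly.coeff_zero_ne_zero hx hx0] using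
      nextCoeff_minpoly_eq_zero_of_trace_eq_zero h2
  refine ⟨-(minpoly F x).coeff 0, ?_⟩
  have hc3 : (minpoly F x).coeff 3 = 1 := hdeg ▸ (minpoly.monic hx).coeff_natDegree
  ext (_ | _ | _ | _ | n)
  · simp
  · simp [hc1]
  · simp [hc2]
  · simp [hc3]
  · rw [coeff_eq_zero_of_natDegree_lt (by omega)]
    simp [coeff_X_pow]

end

/-- Let `L/F` be a Galois extension of fields of characteristic zero with `[L:F] = 3`,
and suppose `α ∈ L` is a nonzero element with `Tr_{L/F}(α) = 0` and `Tr_{L/F}(α⁻¹) = 0`.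
Then the minimal polynomial of `α` over `F` has the form `X³ − a` for some `a ∈ F`, and
`F` contains a primitive third root of unity. -/
theorem stmt_3 (F L : Type*) [Field F] [CharZero F] [Field L] [Algebra F L]
    [FiniteDimensional F L] [IsGalois F L] (hdim : Module.finrank F L = 3)
    (α : L) (hα : α ≠ 0) (h1 : Algebra.trace F L α = 0) (h2 : Algebra.trace F L α⁻¹ = 0) :
    (∃ a : F, minpoly F α = X ^ 3 - C a) ∧ ∃ ω : F, ω ≠ 1 ∧ ω ^ 3 = 1 := by
  have hprime : (finrank F L).Prime := hdim ▸ Nat.prime_three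
  have hdeg : (minpoly F α).natDegree = 3 := hdim ▸
    (mem_range_algebraMap_or_natDegree_minpoly_eq_finrank hprime α).resolve_left
      (notMem_range_algebraMap_of_trace_eq_zero hα h1)
  obtain ⟨a, ha⟩ := minpoly_eq_X_pow_three_sub_C_of_trace_eq_zero hα hdeg h1 h2
  obtain ⟨ζ, hζ1, hζ3⟩ := exists_pow_eq_one_ne_one_of_minpoly_eq_X_pow_sub_C hα (by norm_num) ha
  obtain ⟨ω, rfl⟩ := mem_range_algebraMap_of_pow_finrank_eq_one hprime (hdim ▸ hζ3)
  refine ⟨⟨a, ha⟩, ω, fun hω ↦ hζ1 (by rw [hω, map_one]), (algebraMap F L).injective ?_⟩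
  rwa [map_pow, map_one]
end

section
/- Let F be a field of characteristic zero and let ℍ(F) be the Hamilton quaternion algebra over F, i.e. the quaternion F-algebra with basis 1, i, j, k and relations i² = j² = −1, ij = −ji = k. Then ℍ(F) is split, i.e. there is an F-algebra isomorphism ℍ(F) ≅ M₂(F), if and only if there exist x, y ∈ F with x² + y² = −1. -/
open scoped Quaternion

/-!
If `e : ℍ[F] ≃ₐ[F] M₂(F)`, the preimage of a nonzero nilpotent matrix is a nonzero quaternion of
norm `a² + b² + c² + d² = 0`; splitting off `a² + b²` and using the two-square identity
`(a² + b²)(c² + d²) = (ac - bd)² + (ad + bc)²` turns such a nontrivial zero into `x² + y² = -1`.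
Conversely, if `x² + y² = -1`, the matrices `I = [[x, y], [y, -x]]` and `J = [[0, 1], [-1, 0]]`
satisfy `I² = J² = -1` and `JI = -IJ`, so they define an algebra map `ℍ[F] → M₂(F)`; reading off
the entries shows it is injective when `2 ≠ 0`, hence bijective by dimension count.
-/

section

variable {F : Type*} [Field F]

theorem eq_zero_of_sq_add_sq_eq_zero (hF : ¬ ∃ x y : F, x ^ 2 + y ^ 2 = -1) {a b : F}
    (h : a ^ 2 + b ^ 2 = 0) : a = 0 ∧ b = 0 := by
  have ha : a = 0 := by
    by_contra ha
    exact hF ⟨b / a, 0, by field_simp; linear_combination h⟩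
  subst ha
  exact ⟨rfl, pow_eq_zero_iff two_ne_zero |>.mp (by simpa using h)⟩

theorem quaternion_eq_zero_of_normSq_eq_zero (hF : ¬ ∃ x y : F, x ^ 2 + y ^ 2 = -1)
    {q : ℍ[F]} (h : Quaternion.normSq q = 0) : q = 0 := by
  rw [Quaternion.normSq_def'] at h
  by_cases hs : q.re ^ 2 + q.imI ^ 2 = 0
  · obtain ⟨hre, hi⟩ := eq_zero_of_sq_add_sq_eq_zero hF hs
    obtain ⟨hj, hk⟩ := eq_zero_of_sq_add_sq_eq_zero hF (a := q.imJ) (b := q.imK)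
      (by linear_combination h - hs)
    exact QuaternionAlgebra.ext hre hi hj hk
  · refine absurd ⟨(q.re * q.imJ - q.imI * q.imK) / (q.re ^ 2 + q.imI ^ 2),
      (q.re * q.imK + q.imI * q.imJ) / (q.re ^ 2 + q.imI ^ 2), ?_⟩ hF
    field_simp
    linear_combination (q.re ^ 2 + q.imI ^ 2) * h

theorem isReduced_quaternion (hF : ¬ ∃ x y : F, x ^ 2 + y ^ 2 = -1) : IsReduced ℍ[F] where
  eq_zero _ hq := quaternion_eq_zero_of_normSq_eq_zero hF (hq.map Quaternion.normSq).eq_zero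

end

theorem Matrix.not_isReduced {n R : Type*} [Fintype n] [DecidableEq n] [Nontrivial n]
    [Semiring R] [Nontrivial R] : ¬ IsReduced (Matrix n n R) := by
  obtain ⟨i, j, hij⟩ := exists_pair_ne n
  intro hR
  have hnil : IsNilpotent (single i j (1 : R)) :=
    ⟨2, by simp [sq, hij.symm]⟩
  simpa using congr_fun₂ hnil.eq_zero i j

def Matrix.quaternionBasis {R : Type*} [CommRing R] {x y : R} (h : x ^ 2 + y ^ 2 = -1) :
    QuaternionAlgebra.Basis (Matrix (Fin 2) (Fin 2) R) (-1 : R) 0 (-1) where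
  i := !![x, y; y, -x]
  j := !![0, 1; -1, 0]
  k := !![-y, x; x, y]
  i_mul_i := by
    rw [zero_smul, add_zero, ← h]
    simp only [mul_fin_two, one_fin_two, smul_of, smul_cons, smul_eq_mul, smul_empty]
    ring_nf
  j_mul_j := by
    simp only [mul_fin_two, one_fin_two, smul_of, smul_cons, smul_eq_mul, smul_empty]
    ring_nf
  i_mul_j := by
    rw [mul_fin_two]
    ring_nf
  j_mul_i := by
    rw [zero_smul, zero_sub]
    simp only [mul_fin_two, neg_of, neg_cons, neg_empty]
    ring_nf

theorem Matrix.quaternionBasis_liftHom_injective {F : Type*} [Field F] (h2 : (2 : F) ≠ 0)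
    {x y : F} (h : x ^ 2 + y ^ 2 = -1) : Function.Injective (quaternionBasis h).liftHom := by
  rw [injective_iff_map_eq_zero]
  intro q hq
  have h00 := congr_fun₂ hq 0 0
  have h01 := congr_fun₂ hq 0 1
  have h10 := congr_fun₂ hq 1 0
  have h11 := congr_fun₂ hq 1 1
  simp only [quaternionBasis, QuaternionAlgebra.Basis.liftHom_apply, QuaternionAlgebra.Basis.lift,
    smul_of, smul_cons, smul_eq_mul, smul_empty, mul_neg, mul_zero, mul_one, add_apply,
    algebraMap_matrix_apply, ↓reduceIte, Algebra.algebraMap_self, RingHom.id_apply, of_apply,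
    cons_val', cons_val_zero, cons_val_fin_one, add_zero, zero_ne_one, cons_val_one, zero_add,
    one_ne_zero, zero_apply] at h00 h01 h10 h11
  refine QuaternionAlgebra.ext ?_ ?_ ?_ ?_ <;> refine mul_left_cancel₀ h2 (?_ : _ = (2 : F) * 0)
  · linear_combination h00 + h11
  · linear_combination -x * (h00 - h11) - y * (h01 + h10) + 2 * q.imI * h
  · linear_combination h01 - h10
  · linear_combination y * (h00 - h11) - x * (h01 + h10) + 2 * q.imK * h

noncomputable def Matrix.quaternionAlgEquiv {F : Type*} [Field F] (h2 : (2 : F) ≠ 0)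
    {x y : F} (h : x ^ 2 + y ^ 2 = -1) : ℍ[F] ≃ₐ[F] Matrix (Fin 2) (Fin 2) F :=
  have hinj := quaternionBasis_liftHom_injective h2 h
  have hdim : Module.finrank F ℍ[F] = Module.finrank F (Matrix (Fin 2) (Fin 2) F) := by
    simp [Quaternion.finrank_eq_four, Module.finrank_matrix]
  AlgEquiv.ofBijective (quaternionBasis h).liftHom
    ⟨hinj, (LinearMap.injective_iff_surjective_of_finrank_eq_finrank
      (f := (quaternionBasis h).liftHom.toLinearMap) hdim).mp hinj⟩

/-- Let `F` be a field of characteristic zero and `ℍ(F)` the Hamilton quaternion algebra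
over `F` (with `i² = j² = −1`, `ji = −ij`). Then `ℍ(F)` is split, i.e. there is an
`F`-algebra isomorphism `ℍ(F) ≅ M₂(F)`, if and only if there exist `x, y ∈ F` with
`x² + y² = −1`. -/
theorem stmt_5 (F : Type*) [Field F] [CharZero F] :
    Nonempty (ℍ[F] ≃ₐ[F] Matrix (Fin 2) (Fin 2) F) ↔ ∃ x y : F, x ^ 2 + y ^ 2 = -1 := by
  constructor
  · rintro ⟨e⟩
    by_contra hF
    have := isReduced_quaternion hF
    exact Matrix.not_isReduced (isReduced_of_injective e.symm e.symm.injective)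
  · rintro ⟨x, y, h⟩
    exact ⟨Matrix.quaternionAlgEquiv two_ne_zero h⟩
end

section
/- Let F be a field of characteristic zero and suppose x, y ∈ F satisfy x² + y² = −1. Then in the Hamilton quaternion algebra ℍ(F), the element e = (1/2)(1 + x·i + y·j) is an idempotent with e ≠ 0 and e ≠ 1, and e and 1 − e = (1/2)(1 − x·i − y·j) are orthogonal primitive idempotents of ℍ(F) summing to 1. -/
/-!
Every quaternion satisfies `q * q = (2 * re q) • q - normSq q`. Hence `q` is idempotent as soon as
`2 * re q = 1` and `normSq q = 0`, which for `e` is exactly `x² + y² = -1`. Conversely, an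
idempotent other than `0` and `1` cannot be a scalar, so the same relation forces `2 * re q = 1`.
As `re` is additive, an idempotent with `2 * re q = 1` cannot split into two nonzero orthogonal
idempotents: that would give `1 = 1 + 1`.
-/

open scoped Quaternion

/-- An idempotent `f` of a ring is primitive if `f ≠ 0` and whenever `f = f₁ + f₂` with
`f₁, f₂` orthogonal idempotents, then `f₁ = 0` or `f₂ = 0`. -/
def IsPrimitiveIdempotent {R : Type*} [Ring R] (f : R) : Prop :=
  IsIdempotentElem f ∧ f ≠ 0 ∧
    ∀ f₁ f₂ : R, IsIdempotentElem f₁ → IsIdempotentElem f₂ →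
      f₁ * f₂ = 0 → f₂ * f₁ = 0 → f = f₁ + f₂ → f₁ = 0 ∨ f₂ = 0

namespace Quaternion

theorem mul_self_eq_smul_sub_normSq {R : Type*} [CommRing R] (q : ℍ[R]) :
    q * q = (2 * q.re) • q - ((normSq q : R) : ℍ[R]) := by
  rw [← self_mul_star, star_eq_two_re_sub, mul_sub, mul_coe_eq_smul, sub_sub_cancel]

variable {F : Type*} [Field F] {q : ℍ[F]}

theorem isIdempotentElem_of_two_mul_re_eq_one (hre : 2 * q.re = 1) (hnorm : normSq q = 0) :
    IsIdempotentElem q := by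
  rw [IsIdempotentElem, mul_self_eq_smul_sub_normSq, hre, hnorm, one_smul, coe_zero, sub_zero]

theorem two_mul_re_eq_one_of_isIdempotentElem (hq : IsIdempotentElem q) (h0 : q ≠ 0)
    (h1 : q ≠ 1) : 2 * q.re = 1 := by
  by_contra hre
  have hlin : (2 * q.re - 1) • q = ((normSq q : F) : ℍ[F]) := by
    calc (2 * q.re - 1) • q = (2 * q.re) • q - q * q := by rw [hq.eq, sub_smul, one_smul]
      _ = normSq q := by rw [mul_self_eq_smul_sub_normSq, sub_sub_cancel]
  set c := (2 * q.re - 1)⁻¹ * normSq q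
  have hc : q = c := by
    rw [coe_mul, ← hlin, coe_mul_eq_smul, smul_smul, inv_mul_cancel₀ (sub_ne_zero.2 hre), one_smul]
  rw [hc, IsIdempotentElem, ← coe_mul, coe_inj, ← IsIdempotentElem,
    IsIdempotentElem.iff_eq_zero_or_one] at hq
  rcases hq with hc0 | hc1
  · exact h0 (by rw [hc, hc0, coe_zero])
  · exact h1 (by rw [hc, hc1, coe_one])

theorem ne_zero_of_two_mul_re_eq_one (hre : 2 * q.re = 1) : q ≠ 0 := by
  rintro rfl
  simp at hre

theorem ne_one_of_two_mul_re_eq_one (hre : 2 * q.re = 1) : q ≠ 1 := by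
  rintro rfl
  rw [re_one, mul_one, ← one_add_one_eq_two, add_eq_right] at hre
  exact one_ne_zero hre

theorem two_mul_re_one_sub (hre : 2 * q.re = 1) : 2 * (1 - q).re = 1 := by
  rw [re_sub, re_one, mul_sub, hre]
  ring

theorem isPrimitiveIdempotent_of_two_mul_re_eq_one (hq : IsIdempotentElem q)
    (hre : 2 * q.re = 1) : IsPrimitiveIdempotent q := by
  refine ⟨hq, ne_zero_of_two_mul_re_eq_one hre, fun f₁ f₂ hf₁ hf₂ h₁₂ h₂₁ hsum => ?_⟩
  by_contra! ⟨hf₁0, hf₂0⟩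
  have hf₁1 : f₁ ≠ 1 := by rintro rfl; exact hf₂0 (by simpa using h₁₂)
  have hf₂1 : f₂ ≠ 1 := by rintro rfl; exact hf₁0 (by simpa using h₂₁)
  rw [hsum, re_add, mul_add, two_mul_re_eq_one_of_isIdempotentElem hf₁ hf₁0 hf₁1,
    two_mul_re_eq_one_of_isIdempotentElem hf₂ hf₂0 hf₂1, add_eq_right] at hre
  exact one_ne_zero hre

end Quaternion

open Quaternion

/-- Let `F` be a field of characteristic zero and suppose `x, y ∈ F` satisfy
`x² + y² = −1`. Then in the Hamilton quaternion algebra `ℍ(F)`, the element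
`e = (1/2)(1 + x·i + y·j)` is an idempotent with `e ≠ 0` and `e ≠ 1`, and `e` and
`1 − e = (1/2)(1 − x·i − y·j)` are orthogonal primitive idempotents of `ℍ(F)`
summing to `1`. -/
theorem stmt_6 (F : Type*) [Field F] [CharZero F] (x y : F) (h : x ^ 2 + y ^ 2 = -1)
    (i j e : ℍ[F]) (hi : i = ⟨0, 1, 0, 0⟩) (hj : j = ⟨0, 0, 1, 0⟩)
    (he : e = (2⁻¹ : F) • (1 + x • i + y • j)) :
    IsIdempotentElem e ∧ e ≠ 0 ∧ e ≠ 1 ∧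
      1 - e = (2⁻¹ : F) • (1 - x • i - y • j) ∧
      e * (1 - e) = 0 ∧ (1 - e) * e = 0 ∧
      IsPrimitiveIdempotent e ∧ IsPrimitiveIdempotent (1 - e) ∧
      e + (1 - e) = 1 := by
  -- `hi`, `hj` may only be unfolded after the `smul` lemmas have fired
  have hre : 2 * e.re = 1 := by
    simp only [he, smul_add, re_add, re_smul, re_one, smul_eq_mul, mul_one]
    simp [hi, hj]
  have hnorm : normSq e = 0 := by
    have hnorm_sum : normSq (1 + x • i + y • j) = 1 + x ^ 2 + y ^ 2 := by
      simp only [normSq_def', re_add, re_one, re_smul, smul_eq_mul, imI_add, imI_one, imI_smul,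
        zero_add, imJ_add, imJ_one, imJ_smul, imK_add, imK_one, imK_smul]
      simp [hi, hj]
    rw [he, normSq_smul, hnorm_sum, add_assoc, h, add_neg_cancel, mul_zero]
  have hidem := isIdempotentElem_of_two_mul_re_eq_one hre hnorm
  refine ⟨hidem, ne_zero_of_two_mul_re_eq_one hre, ne_one_of_two_mul_re_eq_one hre, ?_,
    hidem.mul_one_sub_self, hidem.one_sub_mul_self,
    isPrimitiveIdempotent_of_two_mul_re_eq_one hidem hre,
    isPrimitiveIdempotent_of_two_mul_re_eq_one hidem.one_sub (two_mul_re_one_sub hre),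
    add_sub_cancel e 1⟩
  rw [he]
  module
end

section
/- Let G be a finite group. Then every primitive central idempotent e of the rational group algebra ℚ[G] lies in the ℚ-linear span of the set of elements e(G,H,K), where (H,K) ranges over all pairs of subgroups K ⊴ H of G with H/K cyclic. -/
open scoped Classical

/-- `K` is normal in `H` (as subgroups of an ambient group). -/
def NormalIn {G : Type*} [Group G] (H K : Subgroup G) : Prop :=
  ∀ h ∈ H, ∀ x ∈ K, h * x * h⁻¹ ∈ K

/-- `Ĥ = (1/|H|)·Σ_{h∈H} h ∈ ℚ[G]`. -/
noncomputable def hatSub {G : Type*} [Group G] [Fintype G] (H : Subgroup G) :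
    MonoidAlgebra ℚ G :=
  (Nat.card H : ℚ)⁻¹ • ∑ h : H, MonoidAlgebra.of ℚ G (h : G)

/-- The subgroups `M` of `G` with `K ≤ M ≤ H`, `M` normal in `H`, `M ≠ K`, and no
subgroup `N` normal in `H` with `K < N < M`; for `K ⊴ H` these are exactly the
preimages in `H` of the minimal normal subgroups of `H/K`. -/
def minNormalAbove {G : Type*} [Group G] (H K : Subgroup G) : Set (Subgroup G) :=
  {M | K ≤ M ∧ M ≤ H ∧ NormalIn H M ∧ M ≠ K ∧
    ¬∃ N : Subgroup G, NormalIn H N ∧ K < N ∧ N < M}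

/-- `ε(H,K) = Π_{M ∈ minNormalAbove H K} (K̂ − M̂)`, with the convention
`ε(K,K) = K̂`.  (The factors of this product pairwise commute, so the product does not
depend on the order of the factors, which is here fixed by an arbitrary well-ordering.) -/
noncomputable def eps {G : Type*} [Group G] [Fintype G] (H K : Subgroup G) :
    MonoidAlgebra ℚ G :=
  if H = K then hatSub K
  else
    letI lo : LinearOrder (Subgroup G) := linearOrderOfSTO WellOrderingRel
    haveI : DecidableRel lo.le := fun _ _ => Classical.dec _
    haveI : IsTrans (Subgroup G) lo.le := ⟨lo.le_trans⟩
    haveI : IsAntisymm (Subgroup G) lo.le := ⟨lo.le_antisymm⟩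
    haveI : IsTotal (Subgroup G) lo.le := ⟨lo.le_total⟩
    (((Set.toFinite (minNormalAbove H K)).toFinset.sort lo.le).map
      fun M => hatSub K - hatSub M).prod

/-- The conjugate `g⁻¹ · α · g` of an element `α` of the group algebra. -/
noncomputable def conjBy {G : Type*} [Group G] (g : G) (α : MonoidAlgebra ℚ G) :
    MonoidAlgebra ℚ G :=
  MonoidAlgebra.of ℚ G g⁻¹ * α * MonoidAlgebra.of ℚ G g

/-- `e(G,H,K)`: the sum of the distinct `G`-conjugates of `ε(H,K)`. -/
noncomputable def eGHK {G : Type*} [Group G] [Fintype G] (H K : Subgroup G) :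
    MonoidAlgebra ℚ G :=
  ∑ x ∈ (Set.finite_range fun g : G => conjBy g (eps H K)).toFinset, x

/-!
The coefficients of a central idempotent `e` of `ℚ[G]` are constant on the generators of each
cyclic subgroup. Indeed, for `a = e g⁻¹ + (1 - e)` we have `a ^ (orderOf g) = 1`, and the trace
of left multiplication by `a ^ k` is `|G| · e(g ^ k)` plus a constant. The traces of the powers
of a rational operator of finite order `n` are `ℕ`-combinations of `n`-th roots of unity, so the
Galois automorphism `ζ ↦ ζ ^ m` of `ℚ(ζ)` gives `tr (a ^ m) = tr a` for `m` prime to `n`.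
Hence `e` is a combination of the sums of generators of cyclic subgroups `C`, and, by induction
over the subgroup lattice, of the `Ĉ = ε(C, C)`. Averaging over conjugation fixes `e` and turns
each `Ĉ` into a multiple of `e(G, C, C)`.
-/

open Finset

section RootProjections

lemma pow_mul_geom_sum_of_pow_eq_one {R : Type*} [Ring R] {b : R} {n : ℕ} (hb : b ^ n = 1)
    (j : ℕ) : b ^ j * ∑ i ∈ range n, b ^ i = ∑ i ∈ range n, b ^ i := by
  have hmul : b * ∑ i ∈ range n, b ^ i = ∑ i ∈ range n, b ^ i := by
    have h := mul_geom_sum b n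
    rwa [hb, sub_self, sub_mul, one_mul, sub_eq_zero] at h
  induction j with
  | zero => rw [pow_zero, one_mul]
  | succ j ih => rw [pow_succ', mul_assoc, ih, hmul]

variable {K A : Type*} [Field K] [Ring A] [Algebra K A]

/-- When `a ^ n = 1` and `ζ` is a primitive `n`-th root of unity, this is the projection onto
the `ζ ^ i`-eigenspace of `a`. -/
noncomputable def rootProj (ζ : K) (n : ℕ) (a : A) (i : ℕ) : A :=
  (n : K)⁻¹ • ∑ j ∈ range n, (ζ⁻¹ ^ i • a) ^ j

variable {ζ : K} {n : ℕ} [NeZero n] {a : A}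

lemma pow_mul_rootProj (hζ : IsPrimitiveRoot ζ n) (ha : a ^ n = 1) (i k : ℕ) :
    a ^ k * rootProj ζ n a i = ζ ^ (i * k) • rootProj ζ n a i := by
  have hζ0 : ζ ≠ 0 := hζ.ne_zero (NeZero.ne n)
  have hb : (ζ⁻¹ ^ i • a) ^ n = 1 := by
    rw [smul_pow, ha, ← pow_mul, mul_comm, pow_mul, inv_pow, hζ.pow_eq_one, inv_one, one_pow,
      one_smul]
  have hak : a ^ k = (ζ ^ i) ^ k • (ζ⁻¹ ^ i • a) ^ k := by
    rw [← smul_pow, smul_smul, ← mul_pow, mul_inv_cancel₀ hζ0, one_pow, one_smul]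
  rw [rootProj, mul_smul_comm, hak, smul_mul_assoc, pow_mul_geom_sum_of_pow_eq_one hb, smul_comm,
    pow_mul]

lemma rootProj_isIdempotentElem (hζ : IsPrimitiveRoot ζ n) (ha : a ^ n = 1) (i : ℕ) :
    IsIdempotentElem (rootProj ζ n a i) := by
  have hζ0 : ζ ≠ 0 := hζ.ne_zero (NeZero.ne n)
  have hfix : ∀ j, (ζ⁻¹ ^ i • a) ^ j * rootProj ζ n a i = rootProj ζ n a i := fun j => by
    rw [smul_pow, smul_mul_assoc, pow_mul_rootProj hζ ha, smul_smul, ← pow_mul, inv_pow,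
      inv_mul_cancel₀ (pow_ne_zero _ hζ0), one_smul]
  have := hζ.neZero'
  rw [IsIdempotentElem]
  nth_rewrite 1 [rootProj]
  rw [smul_mul_assoc, sum_mul, sum_congr rfl fun j _ => hfix j, sum_const, card_range,
    ← Nat.cast_smul_eq_nsmul K, smul_smul, inv_mul_cancel₀ (NeZero.ne (n : K)), one_smul]

lemma sum_rootProj (hζ : IsPrimitiveRoot ζ n) :
    ∑ i ∈ range n, rootProj ζ n a i = 1 := by
  have hgeom : ∀ j ∈ range n, ∑ i ∈ range n, (ζ⁻¹ ^ i • a) ^ j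
      = (if j = 0 then (n : K) else 0) • a ^ j := fun j hj => by
    simp_rw [smul_pow, ← sum_smul, ← pow_mul, mul_comm _ j, pow_mul]
    congr 1
    split_ifs with hj0
    · simp [hj0]
    · have hne : ζ⁻¹ ^ j ≠ 1 := hζ.inv.pow_ne_one_of_pos_of_lt hj0 (mem_range.mp hj)
      rw [geom_sum_eq hne, ← pow_mul, mul_comm, pow_mul, hζ.inv.pow_eq_one, one_pow, sub_self,
        zero_div]
  have := hζ.neZero'
  simp_rw [rootProj, ← smul_sum]
  rw [sum_comm, sum_congr rfl hgeom, sum_eq_single_of_mem 0 (mem_range.mpr (NeZero.pos n))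
    fun j _ hj => by rw [if_neg hj, zero_smul], if_pos rfl, pow_zero, smul_smul,
    inv_mul_cancel₀ (NeZero.ne (n : K)), one_smul]

lemma pow_eq_sum_rootProj (hζ : IsPrimitiveRoot ζ n) (ha : a ^ n = 1) (k : ℕ) :
    a ^ k = ∑ i ∈ range n, ζ ^ (i * k) • rootProj ζ n a i := by
  rw [← sum_congr rfl fun i _ => pow_mul_rootProj hζ ha i k, ← mul_sum, sum_rootProj hζ,
    mul_one]

end RootProjections

theorem LinearMap.exists_trace_pow_eq_sum_natCast_mul {L W : Type*} [Field L] [AddCommGroup W]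
    [Module L W] [FiniteDimensional L W] {ζ : L} {n : ℕ} [NeZero n] (hζ : IsPrimitiveRoot ζ n)
    {g : Module.End L W} (hg : g ^ n = 1) :
    ∃ r : ℕ → ℕ, ∀ k, trace L W (g ^ k) = ∑ i ∈ Finset.range n, ζ ^ (i * k) * r i := by
  refine ⟨fun i => Module.finrank L (range (rootProj ζ n g i)), fun k => ?_⟩
  rw [pow_eq_sum_rootProj hζ hg k, map_sum]
  refine sum_congr rfl fun i _ => ?_
  rw [map_smul, smul_eq_mul,
    (IsIdempotentElem.isProj_range _ (rootProj_isIdempotentElem hζ hg i)).trace]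

theorem LinearMap.trace_pow_eq_trace_of_coprime {V : Type*} [AddCommGroup V] [Module ℚ V]
    [FiniteDimensional ℚ V] {f : Module.End ℚ V} {n m : ℕ} (hf : f ^ n = 1)
    (hm : m.Coprime n) : trace ℚ V (f ^ m) = trace ℚ V f := by
  obtain rfl | hn := eq_or_ne n 0
  · rw [(Nat.coprime_zero_right m).mp hm, pow_one]
  have : NeZero n := ⟨hn⟩
  obtain ⟨L, _, _, _⟩ : ∃ (L : Type) (_ : Field L) (_ : Algebra ℚ L),
      IsCyclotomicExtension {n} ℚ L :=
    ⟨CyclotomicField n ℚ, _, _, CyclotomicField.isCyclotomicExtension n ℚ⟩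
  have hζ := IsCyclotomicExtension.zeta_spec n ℚ L
  set ζ := IsCyclotomicExtension.zeta n ℚ L
  set F := f.baseChange L
  have hF : F ^ n = 1 := by rw [← baseChange_pow, hf, Module.End.one_eq_id, baseChange_id]; rfl
  obtain ⟨r, hr⟩ := exists_trace_pow_eq_sum_natCast_mul hζ hF
  -- the Galois automorphism `ζ ↦ ζ ^ m` fixes the rational number `trace f`
  let σ := IsCyclotomicExtension.fromZetaAut (hζ.pow_of_coprime m hm)
    (Polynomial.cyclotomic.irreducible_rat (NeZero.pos n))
  have hσ : σ ζ = ζ ^ m := IsCyclotomicExtension.fromZetaAut_spec _ _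
  have hfix : σ (trace L _ F) = trace L _ F := by rw [trace_baseChange]; exact σ.commutes _
  apply (algebraMap ℚ L).injective
  rw [← trace_baseChange, ← trace_baseChange, baseChange_pow]
  calc trace L _ (F ^ m)
      = σ (∑ i ∈ Finset.range n, ζ ^ (i * 1) * r i) := by
        rw [hr, map_sum]
        refine sum_congr rfl fun i _ => ?_
        rw [map_mul, map_natCast, map_pow, hσ, mul_one, ← pow_mul, mul_comm i m, mul_comm m i]
    _ = trace L _ F := by rw [← hr 1, pow_one, hfix]

lemma IsIdempotentElem.pow_mul_add_one_sub {R : Type*} [Ring R] {p u : R}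
    (hp : IsIdempotentElem p) (hpu : Commute p u) (k : ℕ) :
    (p * u + (1 - p)) ^ k = p * u ^ k + (1 - p) := by
  induction k with
  | zero => simp
  | succ k ih =>
    have hpk : p * u ^ k * p = p * u ^ k := by
      rw [mul_assoc, ← (hpu.pow_right k).eq, ← mul_assoc, hp.eq]
    have hqp : (1 - p) * p = 0 := by rw [sub_mul, one_mul, hp.eq, sub_self]
    have hqq : (1 - p) * (1 - p) = 1 - p := by rw [mul_sub, mul_one, hqp, sub_zero]
    calc (p * u + (1 - p)) ^ (k + 1)
        = p * u ^ k * p * u + p * u ^ k - p * u ^ k * p + (1 - p) * p * u + (1 - p) * (1 - p) := by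
          rw [pow_succ, ih]; noncomm_ring
      _ = p * u ^ (k + 1) + (1 - p) := by
          rw [hpk, hqp, hqq, pow_succ]; noncomm_ring

theorem MonoidAlgebra.trace_mulLeft {k G : Type*} [CommRing k] [Group G] [Fintype G]
    (α : MonoidAlgebra k G) :
    LinearMap.trace k _ (LinearMap.mulLeft k α) = Fintype.card G * α.coeff 1 := by
  rw [LinearMap.trace_eq_matrix_trace k (MonoidAlgebra.basis G k), Matrix.trace]
  have hdiag : ∀ g, LinearMap.toMatrix (basis G k) (basis G k) (LinearMap.mulLeft k α) g g
      = α.coeff 1 := fun g => by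
    rw [LinearMap.toMatrix_apply]
    change (α * single g 1).coeff g = _
    rw [coeff_mul_single_apply, mul_inv_cancel, mul_one]
  simp only [Matrix.diag_apply, hdiag, sum_const, card_univ, nsmul_eq_mul]

theorem MonoidAlgebra.coeff_pow_eq_of_coprime {G : Type*} [Group G] [Fintype G]
    {e : MonoidAlgebra ℚ G} (hcentral : ∀ x, Commute x e) (hidem : IsIdempotentElem e) (g : G)
    {m : ℕ} (hm : m.Coprime (orderOf g)) : e.coeff (g ^ m) = e.coeff g := by
  set a := e * of ℚ G g⁻¹ + (1 - e)
  have hpow : ∀ k, a ^ k = e * of ℚ G (g ^ k)⁻¹ + (1 - e) := fun k => by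
    rw [hidem.pow_mul_add_one_sub (hcentral _).symm, ← map_pow, inv_pow]
  have htrace : ∀ k, LinearMap.trace ℚ _ (LinearMap.mulLeft ℚ a ^ k)
      = Fintype.card G * (e.coeff (g ^ k) + (1 - e).coeff 1) := fun k => by
    rw [LinearMap.pow_mulLeft, trace_mulLeft, hpow, coeff_add, Finsupp.add_apply, of_apply,
      coeff_mul_single_apply, one_mul, inv_inv, mul_one]
  have hfin : LinearMap.mulLeft ℚ a ^ orderOf g = 1 := by
    rw [LinearMap.pow_mulLeft, hpow, pow_orderOf_eq_one, inv_one, map_one, mul_one,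
      add_sub_cancel, LinearMap.mulLeft_one, Module.End.one_eq_id]
  have h := LinearMap.trace_pow_eq_trace_of_coprime hfin hm
  rw [htrace, ← pow_one (LinearMap.mulLeft ℚ a), htrace, pow_one] at h
  exact add_right_cancel (mul_left_cancel₀ (Nat.cast_ne_zero.mpr Fintype.card_ne_zero) h)

lemma exists_coprime_pow_eq_of_zpowers_eq {G : Type*} [Group G] [Finite G] {g h : G}
    (hgh : Subgroup.zpowers h = Subgroup.zpowers g) :
    ∃ k : ℕ, k.Coprime (orderOf g) ∧ g ^ k = h := by
  have hh : h ∈ Submonoid.powers g :=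
    (isOfFinOrder_of_finite g).mem_powers_iff_mem_zpowers.mpr (hgh ▸ Subgroup.mem_zpowers h)
  obtain ⟨k, rfl⟩ := hh
  refine ⟨k, ?_, rfl⟩
  have hord : orderOf g / (orderOf g).gcd k = orderOf g := by
    rw [← orderOf_pow, ← Nat.card_zpowers, hgh, Nat.card_zpowers]
  exact Nat.coprime_comm.mp (((Nat.div_eq_self).mp hord).resolve_left (orderOf_pos g).ne')

theorem MonoidAlgebra.coeff_eq_of_zpowers_eq {G : Type*} [Group G] [Fintype G]
    {e : MonoidAlgebra ℚ G} (hcentral : ∀ x, Commute x e) (hidem : IsIdempotentElem e) {g h : G}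
    (hgh : Subgroup.zpowers h = Subgroup.zpowers g) : e.coeff h = e.coeff g := by
  obtain ⟨k, hk, rfl⟩ := exists_coprime_pow_eq_of_zpowers_eq hgh
  exact coeff_pow_eq_of_coprime hcentral hidem g hk

section CyclicSpan

variable {G : Type*} [Group G] [Fintype G]

open MonoidAlgebra Subgroup

noncomputable def sumGenerators (C : Subgroup G) : MonoidAlgebra ℚ G :=
  ∑ x with zpowers x = C, of ℚ G x

lemma sum_of_mem_eq_card_smul_hatSub (C : Subgroup G) :
    ∑ x with x ∈ C, of ℚ G x = (Nat.card C : ℚ) • hatSub C := by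
  rw [hatSub, smul_smul, mul_inv_cancel₀ (Nat.cast_ne_zero.mpr Nat.card_pos.ne'), one_smul]
  exact sum_subtype _ (by simp) _

lemma sum_of_mem_eq_sum_sumGenerators (C : Subgroup G) :
    ∑ x with x ∈ C, of ℚ G x = ∑ D with D ≤ C, sumGenerators D := by
  rw [← sum_fiberwise_of_maps_to (g := zpowers) (t := {D | D ≤ C})
    (fun x hx => by simpa using (mem_filter.mp hx).2)]
  refine sum_congr rfl fun D hD => ?_
  rw [sumGenerators, filter_filter]
  refine sum_congr (filter_congr fun x _ => ?_) fun _ _ => rfl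
  constructor
  · exact And.right
  · intro hx
    exact ⟨(mem_filter.mp hD).2 (hx ▸ mem_zpowers x), hx⟩

noncomputable def cyclicHatSpan (G : Type*) [Group G] [Fintype G] :
    Submodule ℚ (MonoidAlgebra ℚ G) :=
  Submodule.span ℚ (Set.range fun g : G => hatSub (zpowers g))

lemma sumGenerators_mem_cyclicHatSpan (C : Subgroup G) : sumGenerators C ∈ cyclicHatSpan G := by
  induction C using WellFoundedLT.induction with
  | ind C ih =>
  by_cases hC : ∃ g, zpowers g = C
  · obtain ⟨g, rfl⟩ := hC
    have hsplit := sum_of_mem_eq_sum_sumGenerators (zpowers g)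
    rw [sum_of_mem_eq_card_smul_hatSub, ← add_sum_erase _ _ (a := zpowers g) (by simp)]
      at hsplit
    rw [eq_sub_of_add_eq hsplit.symm]
    refine sub_mem (Submodule.smul_mem _ _ (Submodule.subset_span ⟨g, rfl⟩))
      (sum_mem fun D hD => ?_)
    obtain ⟨hDC, hD⟩ := mem_erase.mp hD
    exact ih D (lt_of_le_of_ne (mem_filter.mp hD).2 hDC)
  · simp only [not_exists] at hC
    rw [sumGenerators, filter_false_of_mem fun x _ => hC x, sum_empty]
    exact zero_mem _

lemma mem_cyclicHatSpan_of_coeff_eq (α : MonoidAlgebra ℚ G)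
    (hα : ∀ g h : G, zpowers h = zpowers g → α.coeff h = α.coeff g) : α ∈ cyclicHatSpan G := by
  rw [← (basis G ℚ).sum_repr α, ← sum_fiberwise univ zpowers]
  refine sum_mem fun C _ => ?_
  obtain hC | ⟨g, hg⟩ := (filter (fun x => zpowers x = C) univ).eq_empty_or_nonempty
  · rw [hC, sum_empty]
    exact zero_mem _
  · have hconst : ∀ x ∈ filter (fun x => zpowers x = C) univ,
        (basis G ℚ).repr α x • basis G ℚ x = α.coeff g • of ℚ G x :=
      fun x hx => by
        rw [← hα g x (((mem_filter.mp hx).2).trans (mem_filter.mp hg).2.symm)]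
        rfl
    rw [sum_congr rfl hconst, ← smul_sum]
    exact Submodule.smul_mem _ _ (sumGenerators_mem_cyclicHatSpan C)

end CyclicSpan

section Conjugation

variable {G : Type*} [Group G]

open MonoidAlgebra

lemma conjBy_mul (a b : G) (α : MonoidAlgebra ℚ G) :
    conjBy (a * b) α = conjBy b (conjBy a α) := by
  simp only [conjBy, mul_inv_rev, map_mul, mul_assoc]

lemma conjBy_inv_conjBy (g : G) (α : MonoidAlgebra ℚ G) : conjBy g⁻¹ (conjBy g α) = α := by
  rw [← conjBy_mul, mul_inv_cancel, conjBy, inv_one, map_one, one_mul, mul_one]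

lemma conjBy_eq_self_of_forall_commute {e : MonoidAlgebra ℚ G} (hcentral : ∀ x, Commute x e)
    (g : G) : conjBy g e = e := by
  rw [conjBy, (hcentral _).eq, mul_assoc, ← map_mul, inv_mul_cancel, map_one, mul_one]

variable [Fintype G]

lemma sum_conjBy_eq_card_smul (α : MonoidAlgebra ℚ G) :
    ∑ g, conjBy g α = #{g | conjBy g α = α} •
      ∑ β ∈ (Set.finite_range fun g : G => conjBy g α).toFinset, β := by
  have himage : univ.image (fun g => conjBy g α)
      = (Set.finite_range fun g : G => conjBy g α).toFinset := by
    ext; simp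
  rw [← himage, smul_sum]
  refine (sum_comp (fun β => β) (fun g => conjBy g α)).trans (sum_congr rfl fun β hβ => ?_)
  obtain ⟨g₀, -, rfl⟩ := mem_image.mp hβ
  congr 1
  refine card_nbij' (· * g₀⁻¹) (· * g₀) (fun g hg => ?_) (fun g hg => ?_) (fun g _ => by simp)
    (fun g _ => by simp)
  · simp only [mem_coe, mem_filter, mem_univ, true_and] at hg ⊢
    rw [conjBy_mul, hg, conjBy_inv_conjBy]
  · simp only [mem_coe, mem_filter, mem_univ, true_and] at hg ⊢
    rw [conjBy_mul, hg]

noncomputable def conjSum (G : Type*) [Group G] [Fintype G] :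
    MonoidAlgebra ℚ G →ₗ[ℚ] MonoidAlgebra ℚ G :=
  ∑ g : G, LinearMap.mulRight ℚ (of ℚ G g) ∘ₗ LinearMap.mulLeft ℚ (of ℚ G g⁻¹)

lemma conjSum_apply (α : MonoidAlgebra ℚ G) : conjSum G α = ∑ g, conjBy g α := by
  simp only [conjSum, LinearMap.sum_apply, LinearMap.comp_apply,
    LinearMap.mulLeft_apply, LinearMap.mulRight_apply, conjBy]

end Conjugation

lemma eps_self {G : Type*} [Group G] [Fintype G] (C : Subgroup G) : eps C C = hatSub C :=
  if_pos rfl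

theorem stmt_8_general (G : Type*) [Group G] [Fintype G] (e : MonoidAlgebra ℚ G)
    (hcentral : ∀ x : MonoidAlgebra ℚ G, x * e = e * x)
    (hidem : e * e = e) :
    e ∈ Submodule.span ℚ
      {x : MonoidAlgebra ℚ G | ∃ H K : Subgroup G, K ≤ H ∧ NormalIn H K ∧
        (∃ a ∈ H, ∀ h ∈ H, ∃ z : ℤ, (a ^ z)⁻¹ * h ∈ K) ∧ x = eGHK H K} := by
  have he : e ∈ cyclicHatSpan G := mem_cyclicHatSpan_of_coeff_eq e fun _ _ =>
    MonoidAlgebra.coeff_eq_of_zpowers_eq hcentral hidem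
  have hsum := Submodule.mem_map_of_mem (f := conjSum G) he
  rw [conjSum_apply, sum_congr rfl fun g _ => conjBy_eq_self_of_forall_commute hcentral g,
    sum_const, card_univ, ← Nat.cast_smul_eq_nsmul ℚ, cyclicHatSpan, Submodule.map_span] at hsum
  refine (Submodule.smul_mem_iff _ (Nat.cast_ne_zero.mpr Fintype.card_ne_zero)).mp
    (Submodule.span_le.mpr ?_ hsum)
  rintro _ ⟨_, ⟨g, rfl⟩, rfl⟩
  simp only [SetLike.mem_coe, conjSum_apply]
  rw [← eps_self, sum_conjBy_eq_card_smul]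
  exact Submodule.smul_of_tower_mem _ _ (Submodule.subset_span
    ⟨_, _, le_rfl, fun h hh x hx => mul_mem (mul_mem hh hx) (inv_mem hh),
      ⟨1, one_mem _, fun h hh => ⟨0, by simpa using hh⟩⟩, rfl⟩)

/-- Let `G` be a finite group. Then every primitive central idempotent `e` of the
rational group algebra `ℚ[G]` lies in the `ℚ`-linear span of the set of elements
`e(G,H,K)`, where `(H,K)` ranges over all pairs of subgroups `K ⊴ H` of `G` with
`H/K` cyclic. -/
theorem stmt_8 (G : Type*) [Group G] [Fintype G] (e : MonoidAlgebra ℚ G)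
    (hne : e ≠ 0)
    (hcentral : ∀ x : MonoidAlgebra ℚ G, x * e = e * x)
    (hidem : e * e = e)
    (hprim : ¬∃ e₁ e₂ : MonoidAlgebra ℚ G, e₁ ≠ 0 ∧ e₂ ≠ 0 ∧
      (∀ x, x * e₁ = e₁ * x) ∧ (∀ x, x * e₂ = e₂ * x) ∧
      e₁ * e₁ = e₁ ∧ e₂ * e₂ = e₂ ∧ e₁ * e₂ = 0 ∧ e = e₁ + e₂) :
    e ∈ Submodule.span ℚ
      {x : MonoidAlgebra ℚ G | ∃ H K : Subgroup G, K ≤ H ∧ NormalIn H K ∧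
        (∃ a ∈ H, ∀ h ∈ H, ∃ z : ℤ, (a ^ z)⁻¹ * h ∈ K) ∧ x = eGHK H K} :=
  stmt_8_general G e hcentral hidem
end

section
/- Let p be a prime, s ≥ 1, and let L = ℚ(ζ) be the p^s-th cyclotomic field over ℚ with ζ a primitive p^s-th root of unity. Let K be an intermediate field of L/ℚ such that ζ^{p^{s−1}} ∈ K (a primitive p-th root of unity), and such that if p = 2 then s ≥ 2 and ζ^{2^{s−2}} ∈ K (a primitive fourth root of unity). Then for every integer i with ζ^i ∉ K, one has Tr_{L/K}(ζ^i) = 0. -/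
/-!
A `K`-automorphism `σ` of `L` acts by `ζ ↦ ζ ^ a`, and since it fixes `ζ ^ p ^ (s - 1)` (and
`ζ ^ 2 ^ (s - 2)` when `p = 2`) we get `a ≡ 1 [ZMOD p]` (resp. `[ZMOD 4]`). For such `a`, passing
from `a` to `a ^ p` raises the `p`-adic valuation of `a - 1` by exactly one, because
`1 + a + ⋯ + a ^ (p - 1) ≡ p [ZMOD p ^ 2]`. Choosing `σ` with `σ (ζ ^ i) ≠ ζ ^ i`, a suitable
power `τ = σ ^ (p ^ m)` therefore satisfies `τ (ζ ^ i) = η * ζ ^ i` with `η ≠ 1` a power of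
`ζ ^ p ^ (s - 1) ∈ K`. As the trace is `τ`-invariant and `K`-linear, `Tr (ζ ^ i) = η * Tr (ζ ^ i)`.
-/

namespace Int

variable {p : ℕ}

theorem sq_dvd_geom_sum_sub_prime (hp : p.Prime) {B : ℤ} (hB : (p : ℤ) ∣ B - 1)
    (hB2 : p = 2 → 4 ∣ B - 1) : (p : ℤ) ^ 2 ∣ ∑ k ∈ Finset.range p, B ^ k - p := by
  obtain rfl | hodd := hp.eq_two_or_odd'
  · convert hB2 rfl using 1
    · norm_num
    · simp only [Finset.sum_range_succ, Finset.sum_range_zero]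
      ring
  · obtain ⟨c, hc⟩ := hB
    simpa [eq_add_of_sub_eq hc, add_comm] using odd_sq_dvd_geom_sum₂_sub (R := ℤ) 1 c hodd

theorem pow_dvd_sub_one_mul_of_pow_succ_dvd (hp : p.Prime) {B i : ℤ} {n : ℕ}
    (hB : (p : ℤ) ∣ B - 1) (hB2 : p = 2 → 4 ∣ B - 1) (h : (p : ℤ) ^ (n + 1) ∣ (B ^ p - 1) * i) :
    (p : ℤ) ^ n ∣ (B - 1) * i := by
  obtain ⟨c, hc⟩ := sq_dvd_geom_sum_sub_prime hp hB hB2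
  have hp0 : (p : ℤ) ≠ 0 := by exact_mod_cast hp.ne_zero
  have hsplit : (B ^ p - 1) * i = p * ((1 + p * c) * ((B - 1) * i)) := by
    rw [← geom_sum_mul, eq_add_of_sub_eq hc]
    ring
  have hcop : IsCoprime ((p : ℤ) ^ n) (1 + p * c) := IsCoprime.pow_left ⟨-c, 1, by ring⟩
  rw [hsplit, pow_succ', mul_dvd_mul_iff_left hp0] at h
  exact hcop.dvd_of_dvd_mul_left h

theorem exists_pow_dvd_sub_one_mul_and_not_dvd (hp : p.Prime) {A i : ℤ} {s : ℕ}
    (hA : (p : ℤ) ∣ A - 1) (hA2 : p = 2 → 4 ∣ A - 1) (hAi : ¬ (p : ℤ) ^ s ∣ (A - 1) * i) :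
    ∃ n : ℕ, (p : ℤ) ^ (s - 1) ∣ (A ^ n - 1) * i ∧ ¬ (p : ℤ) ^ s ∣ (A ^ n - 1) * i := by
  have hs : s - 1 + 1 = s := by
    rcases s with _ | s
    · simp at hAi
    · rfl
  suffices ∀ m : ℕ, (p : ℤ) ^ s ∣ (A ^ p ^ m - 1) * i → ∃ n : ℕ,
      (p : ℤ) ^ (s - 1) ∣ (A ^ n - 1) * i ∧ ¬ (p : ℤ) ^ s ∣ (A ^ n - 1) * i from
    this s <| ((pow_dvd_pow _ s.le_succ).trans
      (by simpa using dvd_sub_pow_of_dvd_sub hA s)).mul_right i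
  intro m hm
  induction m with
  | zero => simp_all
  | succ m ih =>
    by_cases hm' : (p : ℤ) ^ s ∣ (A ^ p ^ m - 1) * i
    · exact ih hm'
    refine ⟨p ^ m, ?_, hm'⟩
    have hdvd := sub_one_dvd_pow_sub_one A (p ^ m)
    refine pow_dvd_sub_one_mul_of_pow_succ_dvd hp (hA.trans hdvd) (fun h2 => (hA2 h2).trans hdvd) ?_
    rwa [hs, ← pow_mul, ← pow_succ]

end Int

theorem Algebra.trace_eq_zero_of_algEquiv_apply_eq_smul {K L : Type*} [Field K] [CommRing L]
    [Algebra K L] (σ : L ≃ₐ[K] L) {x : L} {η : K} (hη : η ≠ 1) (h : σ x = η • x) :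
    Algebra.trace K L x = 0 := by
  have h_inv := Algebra.trace_eq_of_algEquiv σ x
  rw [h, map_smul, smul_eq_mul] at h_inv
  exact (mul_left_eq_self₀.mp h_inv).resolve_left hη

theorem AlgEquiv.pow_apply_zpow_of_apply_eq_zpow {K L : Type*} [Field K] [Field L] [Algebra K L]
    {σ : L ≃ₐ[K] L} {ζ : L} {a : ℤ} (hσ : σ ζ = ζ ^ a) (n : ℕ) (j : ℤ) :
    (σ ^ n) (ζ ^ j) = ζ ^ (a ^ n * j) := by
  induction n generalizing j with
  | zero => simp
  | succ n ih =>
    rw [pow_succ, AlgEquiv.mul_apply, map_zpow₀, hσ, ← zpow_mul, ih]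
    ring_nf

namespace IsPrimitiveRoot

variable {L : Type*} [Field L] {ζ : L}

theorem zpow_eq_zpow_iff_dvd {k : ℕ} (hζ : IsPrimitiveRoot ζ k) (hk : k ≠ 0) {x y : ℤ} :
    ζ ^ x = ζ ^ y ↔ (k : ℤ) ∣ x - y := by
  have hζ0 : ζ ≠ 0 := hζ.ne_zero hk
  rw [← hζ.zpow_eq_one_iff_dvd, zpow_sub₀ hζ0, div_eq_one_iff_eq (zpow_ne_zero _ hζ0)]

variable {K : Type*} [Field K] [Algebra K L] {p s : ℕ}

theorem exists_pow_apply_zpow_eq_mul (hp : p.Prime) (hζ : IsPrimitiveRoot ζ (p ^ s))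
    (σ : L ≃ₐ[K] L) (hσ : σ (ζ ^ p ^ (s - 1)) = ζ ^ p ^ (s - 1))
    (hσ2 : p = 2 → 2 ≤ s ∧ σ (ζ ^ 2 ^ (s - 2)) = ζ ^ 2 ^ (s - 2)) {i : ℤ}
    (hi : σ (ζ ^ i) ≠ ζ ^ i) :
    ∃ (n : ℕ) (c : ℤ), (ζ ^ p ^ (s - 1)) ^ c ≠ 1 ∧
      (σ ^ n) (ζ ^ i) = (ζ ^ p ^ (s - 1)) ^ c * ζ ^ i := by
  have hps : p ^ s ≠ 0 := pow_ne_zero _ hp.ne_zero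
  have : NeZero (p ^ s) := ⟨hps⟩
  obtain ⟨a, -, ha⟩ :=
    hζ.eq_pow_of_pow_eq_one (ξ := σ ζ) (by rw [← map_pow, hζ.pow_eq_one, map_one])
  have hpow := AlgEquiv.pow_apply_zpow_of_apply_eq_zpow (a := a) (by rw [← ha, zpow_natCast])
  have hfix {d m : ℕ} (hdm : d * m = p ^ s) (hm : σ (ζ ^ m) = ζ ^ m) : (d : ℤ) ∣ a - 1 := by
    have hm0 : (m : ℤ) ≠ 0 := by exact_mod_cast right_ne_zero_of_mul (hdm ▸ hps)
    rw [← zpow_natCast] at hm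
    have h1 := hpow 1 m
    rw [pow_one, pow_one, hm, eq_comm, hζ.zpow_eq_zpow_iff_dvd hps, ← hdm,
      Nat.cast_mul, ← sub_one_mul] at h1
    exact (mul_dvd_mul_iff_right hm0).mp h1
  have hAi : ¬ (p : ℤ) ^ s ∣ (a - 1) * i := by
    have h1 := hpow 1 i
    rw [pow_one, pow_one] at h1
    rwa [h1, Ne, hζ.zpow_eq_zpow_iff_dvd hps, ← sub_one_mul, Nat.cast_pow] at hi
  have hs : s - 1 + 1 = s := by
    rcases s with _ | s
    · simp at hAi
    · rfl
  have hA : (p : ℤ) ∣ a - 1 := hfix (by rw [← pow_succ', hs]) hσ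
  have hA2 (h2 : p = 2) : (4 : ℤ) ∣ a - 1 := by
    obtain ⟨hs2, hσ4⟩ := hσ2 h2
    subst h2
    exact hfix (d := 4) (by rw [show 4 = 2 ^ 2 by rfl, ← pow_add]; congr 1; omega) hσ4
  obtain ⟨n, ⟨c, hc⟩, hn⟩ := Int.exists_pow_dvd_sub_one_mul_and_not_dvd hp hA hA2 hAi
  have hη : (ζ ^ p ^ (s - 1)) ^ c = ζ ^ ((a ^ n - 1) * i) := by
    rw [hc, ← zpow_natCast, ← zpow_mul]
    push_cast
    rfl
  refine ⟨n, c, ?_, ?_⟩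
  · rw [hη, Ne, hζ.zpow_eq_one_iff_dvd]
    exact_mod_cast hn
  · rw [hpow, hη, ← zpow_add₀ (hζ.ne_zero hps)]
    ring_nf

theorem trace_zpow_eq_zero [IsGalois K L] (hp : p.Prime) (hζ : IsPrimitiveRoot ζ (p ^ s))
    (hK : ζ ^ p ^ (s - 1) ∈ Set.range (algebraMap K L))
    (hK2 : p = 2 → 2 ≤ s ∧ ζ ^ 2 ^ (s - 2) ∈ Set.range (algebraMap K L)) {i : ℤ}
    (hi : ζ ^ i ∉ Set.range (algebraMap K L)) : Algebra.trace K L (ζ ^ i) = 0 := by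
  obtain ⟨σ, hσ⟩ : ∃ σ : L ≃ₐ[K] L, σ (ζ ^ i) ≠ ζ ^ i := by
    rw [InfiniteGalois.mem_range_algebraMap_iff_fixed] at hi
    push Not at hi
    exact hi
  have hfix : ∀ x ∈ Set.range (algebraMap K L), σ x = x := by
    rintro _ ⟨y, rfl⟩
    exact σ.commutes y
  obtain ⟨n, c, hc1, hc⟩ :=
    exists_pow_apply_zpow_eq_mul hp hζ σ (hfix _ hK) (fun h2 => (hK2 h2).imp_right (hfix _)) hσ
  obtain ⟨y, hy⟩ := hK
  refine Algebra.trace_eq_zero_of_algEquiv_apply_eq_smul (σ ^ n) (η := y ^ c) ?_ ?_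
  · intro h
    rw [← hy, ← map_zpow₀, h, map_one] at hc1
    exact hc1 rfl
  · rw [hc, ← hy, ← map_zpow₀, Algebra.smul_def]

end IsPrimitiveRoot

theorem stmt_11_general (p : ℕ) (hp : p.Prime) (s : ℕ)
    (N : ℕ+)
    (ζ : CyclotomicField N ℚ) (hζ : IsPrimitiveRoot ζ (p ^ s))
    (K : IntermediateField ℚ (CyclotomicField N ℚ))
    (hK : ζ ^ (p ^ (s - 1)) ∈ K)
    (hK2 : p = 2 → 2 ≤ s ∧ ζ ^ (2 ^ (s - 2)) ∈ K) :
    ∀ i : ℤ, ζ ^ i ∉ K → Algebra.trace K (CyclotomicField N ℚ) (ζ ^ i) = 0 := by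
  intro i hi
  have : NeZero ((N : ℕ) : ℚ) := ⟨by exact_mod_cast N.ne_zero⟩
  have : IsGalois ℚ (CyclotomicField N ℚ) :=
    @IsCyclotomicExtension.isGalois {(N : ℕ)} ℚ _ _ _ _ (CyclotomicField.isCyclotomicExtension N ℚ)
  exact hζ.trace_zpow_eq_zero hp (by simpa) (by simpa) (by simpa)

/-- Let `p` be a prime, `s ≥ 1`, and `L = ℚ(ζ)` the `p^s`-th cyclotomic field over `ℚ`
with `ζ` a primitive `p^s`-th root of unity. Let `K` be an intermediate field of `L/ℚ`
such that `ζ^{p^{s−1}} ∈ K` (a primitive `p`-th root of unity), and such that if `p = 2`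
then `s ≥ 2` and `ζ^{2^{s−2}} ∈ K` (a primitive fourth root of unity). Then for every
integer `i` with `ζ^i ∉ K`, one has `Tr_{L/K}(ζ^i) = 0`. -/
theorem stmt_11 (p : ℕ) (hp : p.Prime) (s : ℕ) (hs : 1 ≤ s)
    (N : ℕ+) (hN : (N : ℕ) = p ^ s)
    (ζ : CyclotomicField N ℚ) (hζ : IsPrimitiveRoot ζ (p ^ s))
    (K : IntermediateField ℚ (CyclotomicField N ℚ))
    (hK : ζ ^ (p ^ (s - 1)) ∈ K)
    (hK2 : p = 2 → 2 ≤ s ∧ ζ ^ (2 ^ (s - 2)) ∈ K) :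
    ∀ i : ℤ, ζ ^ i ∉ K → Algebra.trace K (CyclotomicField N ℚ) (ζ ^ i) = 0 :=
  stmt_11_general p hp s N ζ hζ K hK hK2
end

section
/- Let p be a prime, s ≥ 1, and let L = ℚ(ζ) be the p^s-th cyclotomic field over ℚ with ζ a primitive p^s-th root of unity. Let K be an intermediate field of L/ℚ such that ζ^{p^{s−1}} ∈ K, and such that if p = 2 then s ≥ 2 and ζ^{2^{s−2}} ∈ K. Let i be an integer with ζ^i ∉ K and let d be the least natural number such that ζ^{i·p^d} ∈ K. Then [K(ζ^i) : K] = p^d and the minimal polynomial of ζ^i over K is X^{p^d} − ζ^{i·p^d}. -/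
open Polynomial IntermediateField

/-!
Since `K` contains the primitive `p`-th root of unity `ζ ^ p ^ (s - 1)`, two `p`-th roots of an
element of `K` differ by a factor in `K`; so if `a = ζ ^ (i * p ^ d)` were a `p`-th power in `K`,
then `ζ ^ (i * p ^ (d - 1))` would lie in `K`, against the minimality of `d`. By Kummer theory
`X ^ p ^ d - a` is then irreducible over `K` (for `p = 2` this uses the square root
`ζ ^ 2 ^ (s - 2)` of `-1` in `K`), so it is the minimal polynomial of its root `ζ ^ i`.
-/

/-- The induction of `X_pow_sub_C_irreducible_of_odd`: a square root `b` of `x` in `K⟮x⟯`, where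
`x ^ 2 = a`, has `N(b) ^ 2 = N(x) = -a`, so `j * N(b)` would be a square root of `a`. -/
theorem X_pow_sub_C_irreducible_of_two_pow {K : Type*} [Field K] {j : K} (hj : j ^ 2 = -1)
    (n : ℕ) {a : K} (ha : ∀ b : K, b ^ 2 ≠ a) : Irreducible (X ^ (2 ^ n) - C a) := by
  induction n generalizing K with
  | zero => simpa using irreducible_X_sub_C a
  | succ n IH =>
    rw [pow_succ]
    apply X_pow_mul_sub_C_irreducible (X_pow_sub_C_irreducible_of_prime Nat.prime_two ha)
    intro E _ _ x hx
    have hx_int : IsIntegral K x := not_not.mp fun h ↦ by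
      simpa only [degree_zero, degree_X_pow_sub_C two_pos,
        WithBot.natCast_ne_bot] using congr_arg degree (hx.symm.trans (dif_neg h))
    refine IH (j := algebraMap K K⟮x⟯ j) (by rw [← map_pow, hj, map_neg, map_one]) fun b hb ↦ ?_
    apply ha (j * Algebra.norm K b)
    rw [mul_pow, hj, ← map_pow, hb, ← adjoin.powerBasis_gen hx_int,
      Algebra.PowerBasis.norm_gen_eq_coeff_zero_minpoly]
    simp [minpoly_gen, hx]

theorem mem_of_pow_eq_pow_of_isPrimitiveRoot {L S : Type*} [Field L] [SetLike S L]
    [SubmonoidClass S L] {K : S} {n : ℕ} (hn : 0 < n) {ω : L} (hω : IsPrimitiveRoot ω n)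
    (hωK : ω ∈ K) {y b : L} (hb : b ∈ K) (hyb : y ^ n = b ^ n) : y ∈ K := by
  rcases eq_or_ne b 0 with rfl | hb0
  · rwa [(pow_eq_zero_iff hn.ne').mp (hyb.trans (zero_pow hn.ne'))]
  have : NeZero n := .of_pos hn
  obtain ⟨k, -, hk⟩ := hω.eq_pow_of_pow_eq_one (ξ := y / b) (by
    rw [div_pow, hyb, div_self (pow_ne_zero n hb0)])
  rw [← div_mul_cancel₀ y hb0, ← hk]
  exact mul_mem (pow_mem hωK k) hb

theorem pow_ne_pow_prime_pow_of_isLeast {L S : Type*} [Field L] [SetLike S L]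
    [SubmonoidClass S L] {K : S} {p : ℕ} (hp : 0 < p) {ω : L} (hω : IsPrimitiveRoot ω p)
    (hωK : ω ∈ K) {x : L} (hx : x ∉ K) {d : ℕ} (hd : IsLeast {d : ℕ | x ^ p ^ d ∈ K} d)
    {b : L} (hb : b ∈ K) : b ^ p ≠ x ^ p ^ d := by
  intro hbx
  have hd0 : d ≠ 0 := by
    rintro rfl
    exact hx (by simpa using hd.1)
  have hroot : (x ^ p ^ (d - 1)) ^ p = b ^ p := by
    rw [hbx, ← pow_mul, ← pow_succ, Nat.sub_add_cancel (Nat.pos_of_ne_zero hd0)]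
  have := hd.2 (mem_of_pow_eq_pow_of_isPrimitiveRoot hp hω hωK hb hroot)
  omega

theorem stmt_12_general (p : ℕ) (hp : p.Prime) (s : ℕ) (hs : 1 ≤ s)
    (N : ℕ+)
    (ζ : CyclotomicField N ℚ) (hζ : IsPrimitiveRoot ζ (p ^ s))
    (K : IntermediateField ℚ (CyclotomicField N ℚ))
    (hK : ζ ^ (p ^ (s - 1)) ∈ K)
    (hK2 : p = 2 → 2 ≤ s ∧ ζ ^ (2 ^ (s - 2)) ∈ K)
    (i : ℤ) (hi : ζ ^ i ∉ K)
    (d : ℕ) (hd : IsLeast {d : ℕ | ζ ^ (i * (p : ℤ) ^ d) ∈ K} d) :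
    Module.finrank K (IntermediateField.adjoin K {ζ ^ i}) = p ^ d ∧
      minpoly K (ζ ^ i) =
        X ^ (p ^ d) - C (⟨ζ ^ (i * (p : ℤ) ^ d), hd.1⟩ : K) := by
  set a : K := ⟨ζ ^ (i * (p : ℤ) ^ d), hd.1⟩
  have hzpow (e : ℕ) : ζ ^ (i * (p : ℤ) ^ e) = (ζ ^ i) ^ p ^ e := by
    rw [zpow_mul, ← zpow_natCast]
    push_cast
    rfl
  simp only [hzpow] at hd
  have hps : p ^ s = p ^ (s - 1) * p := by rw [← pow_succ, Nat.sub_add_cancel hs]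
  have hωp := hζ.pow (pow_pos hp.pos s) hps
  have ha (b : K) : b ^ p ≠ a := fun hb ↦ pow_ne_pow_prime_pow_of_isLeast hp.pos hωp hK hi hd
    b.2 (by rw [← hzpow]; exact congrArg Subtype.val hb)
  have hirr : Irreducible (X ^ (p ^ d) - C a) := by
    rcases eq_or_ne p 2 with rfl | hp2
    · obtain ⟨hs2, hj⟩ := hK2 rfl
      refine X_pow_sub_C_irreducible_of_two_pow (j := ⟨_, hj⟩) ?_ d ha
      ext
      have hps' : 2 ^ (s - 1) = 2 ^ (s - 2) * 2 := by rw [← pow_succ]; congr 1; omega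
      simpa [← pow_mul, ← hps'] using (hζ.pow (pow_pos two_pos s) hps).eq_neg_one_of_two_right
    · exact X_pow_sub_C_irreducible_of_prime_pow hp hp2 d ha
  have hroot : aeval (ζ ^ i) (X ^ (p ^ d) - C a) = 0 := by
    simp [a, hzpow]
  have hmin : minpoly K (ζ ^ i) = X ^ (p ^ d) - C a :=
    (minpoly.eq_of_irreducible_of_monic hirr hroot
      (monic_X_pow_sub_C _ (pow_ne_zero d hp.ne_zero))).symm
  refine ⟨?_, hmin⟩
  rw [adjoin.finrank (.of_finite K _), hmin, natDegree_X_pow_sub_C]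

/-- Let `p` be a prime, `s ≥ 1`, `L = ℚ(ζ)` the `p^s`-th cyclotomic field over `ℚ` with
`ζ` a primitive `p^s`-th root of unity. Let `K` be an intermediate field of `L/ℚ` such
that `ζ^{p^{s−1}} ∈ K`, and if `p = 2` then `s ≥ 2` and `ζ^{2^{s−2}} ∈ K`. Let `i` be an
integer with `ζ^i ∉ K` and `d` the least natural number such that `ζ^{i·p^d} ∈ K`. Then
`[K(ζ^i) : K] = p^d` and the minimal polynomial of `ζ^i` over `K` is
`X^{p^d} − ζ^{i·p^d}`. -/
theorem stmt_12 (p : ℕ) (hp : p.Prime) (s : ℕ) (hs : 1 ≤ s)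
    (N : ℕ+) (hN : (N : ℕ) = p ^ s)
    (ζ : CyclotomicField N ℚ) (hζ : IsPrimitiveRoot ζ (p ^ s))
    (K : IntermediateField ℚ (CyclotomicField N ℚ))
    (hK : ζ ^ (p ^ (s - 1)) ∈ K)
    (hK2 : p = 2 → 2 ≤ s ∧ ζ ^ (2 ^ (s - 2)) ∈ K)
    (i : ℤ) (hi : ζ ^ i ∉ K)
    (d : ℕ) (hd : IsLeast {d : ℕ | ζ ^ (i * (p : ℤ) ^ d) ∈ K} d) :
    Module.finrank K (IntermediateField.adjoin K {ζ ^ i}) = p ^ d ∧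
      minpoly K (ζ ^ i) =
        X ^ (p ^ d) - C (⟨ζ ^ (i * (p : ℤ) ^ d), hd.1⟩ : K) :=
  stmt_12_general p hp s hs N ζ hζ K hK hK2 i hi d hd
end

section
/- Let G be a finite group and K ⊴ H subgroups of G. Then ε(H,K) is an idempotent of the rational group algebra ℚ[G], i.e. ε(H,K)² = ε(H,K). -/
open scoped Classical

/- ————————————————— auxiliary lemmas ————————————————— -/

lemma list_prod_idem {R : Type*} [Monoid R] (l : List R)
    (h1 : ∀ x ∈ l, IsIdempotentElem x) (h2 : ∀ x ∈ l, ∀ y ∈ l, Commute x y) :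
    IsIdempotentElem l.prod := by
  induction l with
  | nil => simp [IsIdempotentElem]
  | cons a t ih =>
    have hcomm : Commute a t.prod :=
      Commute.list_prod_right _ _ (fun y hy => h2 a (by simp) y (by simp [hy]))
    have ht : IsIdempotentElem t.prod :=
      ih (fun x hx => h1 x (by simp [hx])) (fun x hx y hy => h2 x (by simp [hx]) y (by simp [hy]))
    rw [List.prod_cons]
    exact IsIdempotentElem.mul_of_commute hcomm (h1 a (by simp)) ht

lemma sum_mul_sum_hat {G : Type*} [Group G] [Fintype G] (M M' : Subgroup G)
    (hc : ∀ m ∈ M, ∀ x ∈ M', m * x * m⁻¹ ∈ M') :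
    (∑ m : M, MonoidAlgebra.of ℚ G (m : G)) * (∑ x : M', MonoidAlgebra.of ℚ G (x : G))
      = (∑ x : M', MonoidAlgebra.of ℚ G (x : G)) * (∑ m : M, MonoidAlgebra.of ℚ G (m : G)) := by
  rw [Finset.sum_mul_sum, Finset.sum_mul_sum]
  rw [show (∑ m : M, ∑ x : M', MonoidAlgebra.of ℚ G (m:G) * MonoidAlgebra.of ℚ G (x:G))
      = ∑ m : M, ∑ x : M', MonoidAlgebra.of ℚ G (x:G) * MonoidAlgebra.of ℚ G (m:G) from ?_,
    Finset.sum_comm]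
  refine Finset.sum_congr rfl (fun m _ => ?_)
  have hb : Function.Bijective
      (fun x : M' => (⟨(m:G)*x*(m:G)⁻¹, hc m m.2 x x.2⟩ : M')) := by
    constructor
    · intro a b hab
      ext
      have := congrArg (Subtype.val) hab
      simp only at this
      exact mul_left_cancel (mul_right_cancel this)
    · intro y
      refine ⟨⟨(m:G)⁻¹ * y * (m:G), by simpa using hc (m:G)⁻¹ (inv_mem m.2) y y.2⟩, ?_⟩
      ext
      simp [mul_assoc]
  refine Fintype.sum_bijective _ hb _ _ (fun x => ?_)
  show MonoidAlgebra.of ℚ G (m:G) * MonoidAlgebra.of ℚ G (x:G)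
      = MonoidAlgebra.of ℚ G (((m:G) * x * (m:G)⁻¹ : G)) * MonoidAlgebra.of ℚ G (m:G)
  rw [← map_mul, ← map_mul]
  congr 1
  group

lemma sum_mul_of_le {G : Type*} [Group G] [Fintype G] (H K : Subgroup G) (hKH : K ≤ H) :
    (∑ h : H, MonoidAlgebra.of ℚ G (h : G)) * (∑ k : K, MonoidAlgebra.of ℚ G (k : G))
      = (Fintype.card K : ℚ) • ∑ h : H, MonoidAlgebra.of ℚ G (h : G) := by
  rw [Finset.sum_mul_sum, Finset.sum_comm]
  rw [Finset.sum_congr rfl (fun (k : K) _ =>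
    Fintype.sum_bijective (fun h : H => h * ⟨(k : G), hKH k.2⟩)
      (Group.mulRight_bijective _)
      (fun h : H => MonoidAlgebra.of ℚ G (h:G) * MonoidAlgebra.of ℚ G (k:G))
      (fun h : H => MonoidAlgebra.of ℚ G (h:G))
      (fun h => (map_mul (MonoidAlgebra.of ℚ G) _ _).symm))]
  rw [Finset.sum_const, Nat.cast_smul_eq_nsmul]
  simp

lemma mul_sum_of_le {G : Type*} [Group G] [Fintype G] (H K : Subgroup G) (hKH : K ≤ H) :
    (∑ k : K, MonoidAlgebra.of ℚ G (k : G)) * (∑ h : H, MonoidAlgebra.of ℚ G (h : G))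
      = (Fintype.card K : ℚ) • ∑ h : H, MonoidAlgebra.of ℚ G (h : G) := by
  rw [Finset.sum_mul_sum]
  rw [Finset.sum_congr rfl (fun (k : K) _ =>
    Fintype.sum_bijective (fun h : H => (⟨(k : G), hKH k.2⟩ : H) * h)
      (Group.mulLeft_bijective _)
      (fun h : H => MonoidAlgebra.of ℚ G (k:G) * MonoidAlgebra.of ℚ G (h:G))
      (fun h : H => MonoidAlgebra.of ℚ G (h:G))
      (fun h => (map_mul (MonoidAlgebra.of ℚ G) _ _).symm))]
  rw [Finset.sum_const, Nat.cast_smul_eq_nsmul]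
  simp

lemma hat_mul_of_le {G : Type*} [Group G] [Fintype G] {H K : Subgroup G} (h : K ≤ H) :
    hatSub H * hatSub K = hatSub H := by
  unfold hatSub
  rw [smul_mul_assoc, mul_smul_comm, sum_mul_of_le H K h, smul_smul, smul_smul]
  congr 1
  rw [Nat.card_eq_fintype_card, Nat.card_eq_fintype_card]
  have : (Fintype.card K : ℚ) ≠ 0 := Nat.cast_ne_zero.2 Fintype.card_ne_zero
  field_simp

lemma mul_hat_of_le {G : Type*} [Group G] [Fintype G] {H K : Subgroup G} (h : K ≤ H) :
    hatSub K * hatSub H = hatSub H := by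
  unfold hatSub
  rw [smul_mul_assoc, mul_smul_comm, mul_sum_of_le H K h, smul_smul, smul_smul]
  congr 1
  rw [Nat.card_eq_fintype_card, Nat.card_eq_fintype_card]
  have : (Fintype.card K : ℚ) ≠ 0 := Nat.cast_ne_zero.2 Fintype.card_ne_zero
  field_simp

lemma hat_comm {G : Type*} [Group G] [Fintype G] {M M' : Subgroup G}
    (hc : ∀ m ∈ M, ∀ x ∈ M', m * x * m⁻¹ ∈ M') :
    hatSub M * hatSub M' = hatSub M' * hatSub M := by
  unfold hatSub
  rw [smul_mul_assoc, mul_smul_comm, smul_mul_assoc, mul_smul_comm, smul_smul, smul_smul,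
    mul_comm ((Nat.card M' : ℚ)⁻¹), sum_mul_sum_hat M M' hc]

/-- Let `G` be a finite group and `K ⊴ H` subgroups of `G`. Then `ε(H,K)` is an
idempotent of the rational group algebra `ℚ[G]`, i.e. `ε(H,K)² = ε(H,K)`. -/
theorem stmt_15 (G : Type*) [Group G] [Fintype G] (H K : Subgroup G)
    (hKH : K ≤ H) (hnormal : NormalIn H K) :
    eps H K * eps H K = eps H K := by
  by_cases hHK : H = K
  · rw [eps, if_pos hHK]
    exact hat_mul_of_le le_rfl
  · rw [eps, if_neg hHK]
    refine list_prod_idem _ ?_ ?_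
    · intro x hx
      rw [List.mem_map] at hx
      obtain ⟨M, hM, rfl⟩ := hx
      rw [Finset.mem_sort, Set.Finite.mem_toFinset] at hM
      obtain ⟨hKM, hMH, hMn, -, -⟩ := hM
      show (hatSub K - hatSub M) * (hatSub K - hatSub M) = hatSub K - hatSub M
      rw [sub_mul, mul_sub, mul_sub, hat_mul_of_le (le_refl K), mul_hat_of_le hKM,
        hat_mul_of_le hKM, hat_mul_of_le (le_refl M)]
      abel
    · intro x hx y hy
      rw [List.mem_map] at hx hy
      obtain ⟨M, hM, rfl⟩ := hx
      obtain ⟨M', hM', rfl⟩ := hy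
      rw [Finset.mem_sort, Set.Finite.mem_toFinset] at hM hM'
      obtain ⟨hKM, hMH, hMn, -, -⟩ := hM
      obtain ⟨hKM', hMH', hMn', -, -⟩ := hM'
      have hcomm : hatSub M * hatSub M' = hatSub M' * hatSub M :=
        hat_comm (fun m hm x hx => hMn' m (hMH hm) x hx)
      show (hatSub K - hatSub M) * (hatSub K - hatSub M') =
        (hatSub K - hatSub M') * (hatSub K - hatSub M)
      rw [sub_mul, sub_mul, mul_sub, mul_sub, mul_sub, mul_sub,
        mul_hat_of_le hKM, hat_mul_of_le hKM, mul_hat_of_le hKM', hat_mul_of_le hKM', hcomm]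
      abel
end
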